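/- arXiv:2508.04275 — 4 statements merged into one kernel-verified Lean document; each statement's English description precedes it below -/
import Mathlib

section
/- If C = {y ∈ ℝ^d : ⟨u_i, y⟩ ≤ 0 for i = 1,…,d} is a simplicial cone with linearly independent normals u_1,…,u_d, and x ∈ int(C), then d! · vol((C − x)°) = |det(u_1,…,u_d)| / ∏_i (−⟨u_i, x⟩). -/
/-!
Put `λᵢ = -⟪uᵢ, x⟫`, positive because `x` is interior. The linear map `t ↦ ∑ᵢ (tᵢ / λᵢ) • uᵢ`,
whose matrix is `U * diagonal λ⁻¹`, maps the corner simplex `{t | 0 ≤ t, ∑ᵢ tᵢ ≤ 1}` onto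
`(C - x)°`: for `z = ∑ᵢ (tᵢ / λᵢ) • uᵢ` one has `⟪z, y - x⟫ = ∑ᵢ (tᵢ / λᵢ) ⟪uᵢ, y⟫ + ∑ᵢ tᵢ`,
and since `U` is invertible the vector `(⟪uᵢ, y⟫)ᵢ` runs over all nonpositive vectors as `y`
runs over `C`. The corner simplex has volume `1 / d!` and the map has determinant
`det U / ∏ᵢ λᵢ`.
-/

open MeasureTheory Set Matrix WithLp
open scoped RealInnerProductSpace

def cornerSimplex (ι : Type*) [Fintype ι] (c : ℝ) : Set (ι → ℝ) :=
  {t | (∀ i, 0 ≤ t i) ∧ ∑ i, t i ≤ c}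

section CornerSimplex

variable {ι : Type*} [Fintype ι]

theorem measurableSet_cornerSimplex (c : ℝ) : MeasurableSet (cornerSimplex ι c) := by
  simp only [cornerSimplex, ofPred_and, ofPred_forall]
  exact (MeasurableSet.iInter fun i => measurableSet_le measurable_const (measurable_pi_apply i))
    |>.inter (measurableSet_le (by fun_prop) measurable_const)

theorem cornerSimplex_eq_empty {c : ℝ} (hc : c < 0) : cornerSimplex ι c = ∅ :=
  eq_empty_of_forall_notMem fun _ ⟨ht, hsum⟩ =>
    (Finset.sum_nonneg fun i _ => ht i).not_gt (hsum.trans_lt hc)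

theorem cons_mem_cornerSimplex_iff {n : ℕ} {s c : ℝ} {t : Fin n → ℝ} :
    Fin.cons s t ∈ cornerSimplex (Fin (n + 1)) c ↔ 0 ≤ s ∧ t ∈ cornerSimplex (Fin n) (c - s) := by
  simp only [cornerSimplex, mem_ofPred_eq, Fin.forall_fin_succ, Fin.sum_univ_succ, Fin.cons_zero,
    Fin.cons_succ, and_assoc, le_sub_iff_add_le']

theorem volume_setOf_cons_mem_cornerSimplex {n : ℕ} (c s : ℝ) :
    volume {t | Fin.cons s t ∈ cornerSimplex (Fin (n + 1)) c}
      = (Icc 0 c).indicator (fun s => volume (cornerSimplex (Fin n) (c - s))) s := by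
  simp only [cons_mem_cornerSimplex_iff]
  by_cases hs : s ∈ Icc 0 c
  · simp [indicator_of_mem hs, hs.1]
  · rw [indicator_of_notMem hs]
    rcases not_and_or.1 hs with hs | hs
    · simp [hs]
    · simp [cornerSimplex_eq_empty (sub_neg.2 (not_le.1 hs))]

theorem lintegral_Icc_ofReal_sub_pow_div_factorial (n : ℕ) {c : ℝ} (hc : 0 ≤ c) :
    ∫⁻ s in Icc 0 c, ENNReal.ofReal ((c - s) ^ n / n.factorial)
      = ENNReal.ofReal (c ^ (n + 1) / (n + 1).factorial) := by
  have hnonneg : 0 ≤ᵐ[volume.restrict (Icc 0 c)] fun s => (c - s) ^ n / n.factorial := by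
    filter_upwards [self_mem_ae_restrict measurableSet_Icc] with s hs
    have := sub_nonneg.2 hs.2
    positivity
  rw [← ofReal_integral_eq_lintegral_ofReal (by fun_prop : Continuous _).integrableOn_Icc hnonneg,
    integral_Icc_eq_integral_Ioc, ← intervalIntegral.integral_of_le hc,
    intervalIntegral.integral_div, intervalIntegral.integral_comp_sub_left (fun s => s ^ n),
    integral_pow, Nat.factorial_succ]
  congr 1
  push_cast
  field_simp
  ring

theorem volume_cornerSimplex (n : ℕ) {c : ℝ} (hc : 0 ≤ c) :
    volume (cornerSimplex (Fin n) c) = ENNReal.ofReal (c ^ n / n.factorial) := by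
  induction n generalizing c with
  | zero =>
    have : cornerSimplex (Fin 0) c = univ := by ext; simp [cornerSimplex, hc]
    simp [this, volume_pi]
  | succ n ih =>
    have he := (volume_preserving_piFinSuccAbove (fun _ : Fin (n + 1) => ℝ) 0).symm
    rw [← he.measure_preimage (measurableSet_cornerSimplex c).nullMeasurableSet,
      Measure.volume_eq_prod, Measure.prod_apply (he.measurable (measurableSet_cornerSimplex c))]
    have hslice (s : ℝ) : Prod.mk s ⁻¹' ((MeasurableEquiv.piFinSuccAbove (fun _ => ℝ) 0).symm ⁻¹'
        cornerSimplex (Fin (n + 1)) c) = {t | Fin.cons s t ∈ cornerSimplex (Fin (n + 1)) c} := by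
      ext t
      simp only [mem_preimage, MeasurableEquiv.piFinSuccAbove_symm_apply, Fin.insertNthEquiv_zero]
      rfl
    simp_rw [hslice, volume_setOf_cons_mem_cornerSimplex, lintegral_indicator measurableSet_Icc]
    rw [setLIntegral_congr_fun measurableSet_Icc fun s hs => ih (sub_nonneg.2 hs.2),
      lintegral_Icc_ofReal_sub_pow_div_factorial n hc]

end CornerSimplex

theorem ContinuousLinearMap.apply_lt_of_mem_interior {E : Type*} [AddCommGroup E]
    [TopologicalSpace E] [ContinuousAdd E] [Module ℝ E] [ContinuousSMul ℝ E]
    {ℓ : StrongDual ℝ E} (hℓ : ℓ ≠ 0) {c : ℝ} {x : E} (hx : x ∈ interior {y | ℓ y ≤ c}) : ℓ x < c := by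
  have := (ℓ.isOpenMap_of_ne_zero hℓ).interior_preimage_subset_preimage_interior (s := Iic c) hx
  rwa [interior_Iic] at this

theorem inner_neg_of_mem_interior {E : Type*} [NormedAddCommGroup E] [InnerProductSpace ℝ E]
    {v x : E} (hv : v ≠ 0) (hx : x ∈ interior {y | ⟪v, y⟫ ≤ 0}) : ⟪v, x⟫ < 0 :=
  (innerSL ℝ v).apply_lt_of_mem_interior (fun h => hv (inner_self_eq_zero.1 congr($h v))) hx

theorem forall_nonpos_dotProduct_le_iff {ι 𝕜 : Type*} [Fintype ι] [Field 𝕜] [LinearOrder 𝕜]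
    [IsStrictOrderedRing 𝕜] {a : ι → 𝕜} {b : 𝕜} :
    (∀ v ≤ 0, v ⬝ᵥ a ≤ b) ↔ 0 ≤ a ∧ 0 ≤ b := by
  classical
  refine ⟨fun h => ?_, fun ⟨ha, hb⟩ v hv => ?_⟩
  · have hb : 0 ≤ b := by simpa using h 0 le_rfl
    refine ⟨fun i => not_lt.1 fun hai : a i < 0 => ?_, hb⟩
    have hsingle : (Pi.single i ((b + 1) / a i) : ι → 𝕜) ≤ 0 :=
      Pi.single_nonpos.2 (div_nonpos_of_nonneg_of_nonpos (by linarith : (0 : 𝕜) ≤ b + 1) hai.le)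
    have := h _ hsingle
    rw [single_dotProduct, div_mul_cancel₀ _ hai.ne] at this
    linarith
  · exact (Finset.sum_nonpos fun i _ => mul_nonpos_of_nonpos_of_nonneg (hv i) (ha i)).trans hb

section SimplicialCone

variable {ι : Type*} [Fintype ι] {u : ι → EuclideanSpace ℝ ι} {U : Matrix ι ι ℝ}

theorem ofLp_vecMul_eq_inner (hU : ∀ r c, U r c = u c r) (y : EuclideanSpace ℝ ι) :
    ofLp y ᵥ* U = fun i => ⟪u i, y⟫ := by
  ext i
  simp [vecMul, dotProduct, hU, PiLp.inner_apply]

theorem isUnit_of_linearIndependent_cols [DecidableEq ι] (hU : ∀ r c, U r c = u c r)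
    (hu : LinearIndependent ℝ u) : IsUnit U := by
  have hcol : U.col = WithLp.linearEquiv 2 ℝ (ι → ℝ) ∘ u := by
    ext r i
    simp [hU]
  rw [← linearIndependent_cols_iff_isUnit, hcol]
  exact hu.map' _ (LinearEquiv.ker _)

theorem inner_toLpLin_mul_diagonal [DecidableEq ι] (hU : ∀ r c, U r c = u c r) (w : ι → ℝ)
    (t y : EuclideanSpace ℝ ι) :
    ⟪toLpLin 2 2 (U * diagonal w) t, y⟫ = ∑ i, ⟪u i, y⟫ * w i * t i := by
  rw [EuclideanSpace.inner_eq_star_dotProduct, ofLp_toLpLin, toLin'_apply, star_trivial,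
    dotProduct_mulVec, ← vecMul_vecMul, ofLp_vecMul_eq_inner hU]
  simp [dotProduct, vecMul_diagonal]

theorem toLpLin_surjective [DecidableEq ι] {M : Matrix ι ι ℝ} (hM : IsUnit M) :
    Function.Surjective (toLpLin 2 2 M) :=
  (WithLp.equiv 2 _).symm.surjective.comp
    ((mulVec_surjective_iff_isUnit.2 hM).comp (WithLp.equiv 2 _).surjective)

theorem polar_sub_eq_image_cornerSimplex [DecidableEq ι] (hU : ∀ r c, U r c = u c r)
    (hUu : IsUnit U) {C : Set (EuclideanSpace ℝ ι)} (hC : C = {y | ∀ i, ⟪u i, y⟫ ≤ 0})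
    {x : EuclideanSpace ℝ ι} (hx : ∀ i, 0 < -⟪u i, x⟫) :
    {z | ∀ y ∈ C, ⟪z, y - x⟫ ≤ 1} =
      toLpLin 2 2 (U * diagonal fun i => (-⟪u i, x⟫)⁻¹) '' (ofLp ⁻¹' cornerSimplex ι 1) := by
  set f := toLpLin 2 2 (U * diagonal fun i => (-⟪u i, x⟫)⁻¹)
  have hinner (t y : EuclideanSpace ℝ ι) :
      ⟪f t, y - x⟫ = (ofLp y ᵥ* U) ⬝ᵥ (fun i => (-⟪u i, x⟫)⁻¹ * t i) + ∑ i, t i := by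
    rw [inner_toLpLin_mul_diagonal hU, ofLp_vecMul_eq_inner hU, dotProduct,
      ← Finset.sum_add_distrib]
    refine Finset.sum_congr rfl fun i _ => ?_
    rw [inner_sub_right]
    field_simp [(neg_pos.1 (hx i)).ne]
    ring
  have hmem (t : EuclideanSpace ℝ ι) :
      f t ∈ {z | ∀ y ∈ C, ⟪z, y - x⟫ ≤ 1} ↔ t ∈ ofLp ⁻¹' cornerSimplex ι 1 := by
    have hsurj : Function.Surjective fun y : EuclideanSpace ℝ ι => ofLp y ᵥ* U :=
      (vecMul_surjective_iff_isUnit.2 hUu).comp (WithLp.equiv 2 _).surjective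
    have hC' (y : EuclideanSpace ℝ ι) : y ∈ C ↔ ofLp y ᵥ* U ≤ 0 := by
      simp [hC, ofLp_vecMul_eq_inner hU, Pi.le_def]
    calc (∀ y ∈ C, ⟪f t, y - x⟫ ≤ 1)
        ↔ ∀ y : EuclideanSpace ℝ ι, ofLp y ᵥ* U ≤ 0 →
          (ofLp y ᵥ* U) ⬝ᵥ (fun i => (-⟪u i, x⟫)⁻¹ * t i) ≤ 1 - ∑ i, t i := by
          simp only [hC', hinner, ← le_sub_iff_add_le]
      _ ↔ ∀ v ≤ 0, v ⬝ᵥ (fun i => (-⟪u i, x⟫)⁻¹ * t i) ≤ 1 - ∑ i, t i :=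
          (hsurj.forall (p := fun v => v ≤ 0 →
            v ⬝ᵥ (fun i => (-⟪u i, x⟫)⁻¹ * t i) ≤ 1 - ∑ i, t i)).symm
      _ ↔ t ∈ ofLp ⁻¹' cornerSimplex ι 1 := by
          have hscale (i : ι) : 0 ≤ (-⟪u i, x⟫)⁻¹ * t i ↔ 0 ≤ t i :=
            mul_nonneg_iff_of_pos_left (inv_pos.2 (hx i))
          rw [forall_nonpos_dotProduct_le_iff]
          simp only [Pi.le_def, Pi.zero_apply, hscale, sub_nonneg,
            cornerSimplex, mem_preimage, mem_ofPred_eq]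
  have hdiag : IsUnit (diagonal fun i => (-⟪u i, x⟫)⁻¹) := by
    rw [isUnit_iff_isUnit_det, det_diagonal]
    exact (Finset.prod_pos fun i _ => inv_pos.2 (hx i)).ne'.isUnit
  ext z
  constructor
  · intro hz
    obtain ⟨t, rfl⟩ := toLpLin_surjective (hUu.mul hdiag) z
    exact ⟨t, (hmem t).1 hz, rfl⟩
  · rintro ⟨t, ht, rfl⟩
    exact (hmem t).2 ht

end SimplicialCone

/-- For a simplicial cone `C = {y : ⟪u i, y⟫ ≤ 0, i = 1,…,d}` with
linearly independent normals `u 1,…,u d` and `x ∈ int C`,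
`d! · vol((C - x)°) = |det(u 1,…,u d)| / ∏ i (-⟪u i, x⟫)`. -/
theorem stmt2 (d : ℕ) (u : Fin d → EuclideanSpace ℝ (Fin d))
    (hu : LinearIndependent ℝ u)
    (C : Set (EuclideanSpace ℝ (Fin d)))
    (hC : C = {y | ∀ i, ⟪u i, y⟫ ≤ 0})
    (x : EuclideanSpace ℝ (Fin d)) (hx : x ∈ interior C)
    (U : Matrix (Fin d) (Fin d) ℝ)
    (hU : ∀ r c, U r c = u c r) :
    (Nat.factorial d : ℝ) *
      (MeasureTheory.volume
        {z : EuclideanSpace ℝ (Fin d) | ∀ y ∈ C, ⟪z, y - x⟫ ≤ (1 : ℝ)}).toReal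
      = |U.det| / ∏ i, (-⟪u i, x⟫) := by
  have hpos (i : Fin d) : 0 < -⟪u i, x⟫ :=
    neg_pos.2 <| inner_neg_of_mem_interior (hu.ne_zero i) <|
      interior_mono (fun y hy => by rw [hC] at hy; exact hy i) hx
  have hprod : 0 < ∏ i, -⟪u i, x⟫ := Finset.prod_pos fun i _ => hpos i
  rw [polar_sub_eq_image_cornerSimplex hU (isUnit_of_linearIndependent_cols hU hu) hC hpos,
    Measure.addHaar_image_linearMap, LinearMap.det_toLpLin, det_mul, det_diagonal,
    (PiLp.volume_preserving_ofLp (Fin d)).measure_preimage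
      (measurableSet_cornerSimplex 1).nullMeasurableSet,
    volume_cornerSimplex d zero_le_one, ENNReal.toReal_mul, ENNReal.toReal_ofReal (abs_nonneg _),
    ENNReal.toReal_ofReal (by positivity), abs_mul, Finset.prod_inv_distrib,
    abs_inv, abs_of_pos hprod, one_pow]
  field_simp
end

section
/- For a triangle Δ ⊂ ℝ² with unit outward normals u_1,u_2,u_3 and heights h_1,h_2,h_3 over its circumcenter placed at the origin, the determinant of the 3×3 matrix with columns (u_i,h_i) equals Area(Δ)/Circumradius(Δ) (in absolute value). -/
/-!
Write `C = wedge (v 1 - v 0) (v 2 - v 0)` for twice the signed area and `d` for the determinant.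
Multiplying the matrix by the one with rows `(v k, -1)`, of determinant `-C`, gives the diagonal
matrix of the signed heights `⟪u i, v i⟫ - h i`, so `-C d` is their product. Each height times the
opposite side is `±C`, and the product of the three sides is `2R|C|` (that is, `abc = 4R · Area`):
the matrix of squared sides `‖v i - v j‖² = 2R² - 2⟪v i, v j⟫` factors through the same vertex
matrix. Hence `(2Rd)² = C²`. Finally the triangle is the image of the standard triangle under an
affine map of determinant `C`, so its area is `|C| / 2`.
-/

open scoped RealInnerProductSpace Pointwise
open Matrix MeasureTheory Set

local notation "ℝ²" => EuclideanSpace ℝ (Fin 2)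

def wedge (x y : ℝ²) : ℝ := x 0 * y 1 - x 1 * y 0

theorem EuclideanSpace.inner_fin_two (x y : ℝ²) : ⟪x, y⟫ = x 0 * y 0 + x 1 * y 1 := by
  simp [PiLp.inner_apply, Fin.sum_univ_two, mul_comm]

theorem EuclideanSpace.norm_sq_fin_two (x : ℝ²) : ‖x‖ ^ 2 = x 0 ^ 2 + x 1 ^ 2 := by
  simp [EuclideanSpace.norm_sq_eq, Fin.sum_univ_two]

theorem sq_wedge_eq_sq_inner_mul_norm_sq (w : ℝ²) {u e : ℝ²} (hu : ‖u‖ = 1) (hue : ⟪u, e⟫ = 0) :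
    wedge w e ^ 2 = ⟪u, w⟫ ^ 2 * ‖e‖ ^ 2 := by
  have hu2 : u 0 ^ 2 + u 1 ^ 2 = 1 := by
    rw [← EuclideanSpace.norm_sq_fin_two, hu, one_pow]
  rw [EuclideanSpace.inner_fin_two] at hue
  -- writing `μ := wedge u e`, orthogonality forces `e = μ • (-u 1, u 0)`
  have hwedge : wedge w e = ⟪u, w⟫ * wedge u e := by
    rw [EuclideanSpace.inner_fin_two, wedge, wedge]
    linear_combination (w 0 * u 1 - w 1 * u 0) * hue - (w 0 * e 1 - w 1 * e 0) * hu2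
  have hnorm : ‖e‖ ^ 2 = wedge u e ^ 2 := by
    rw [EuclideanSpace.norm_sq_fin_two, wedge]
    linear_combination (u 0 * e 0 + u 1 * e 1) * hue - (e 0 ^ 2 + e 1 ^ 2) * hu2
  rw [hwedge, hnorm]
  ring

theorem sq_inner_sub_mul_norm_sub_sq_eq_sq_wedge {u a b c : ℝ²} {h : ℝ}
    (hu : ‖u‖ = 1) (hb : ⟪u, b⟫ = h) (hc : ⟪u, c⟫ = h) :
    (⟪u, a⟫ - h) ^ 2 * ‖b - c‖ ^ 2 = wedge (b - a) (c - a) ^ 2 := by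
  have hperp : ⟪u, b - c⟫ = 0 := by rw [inner_sub_right, hb, hc, sub_self]
  rw [← hb, ← inner_sub_right, ← sq_wedge_eq_sq_inner_mul_norm_sq (a - b) hu hperp]
  simp only [wedge, PiLp.sub_apply]
  ring

noncomputable def augmentedMatrix {m n : ℕ} (x : Fin m → EuclideanSpace ℝ (Fin n))
    (t : Fin m → ℝ) : Matrix (Fin m) (Fin (n + 1)) ℝ :=
  of fun k => Fin.snoc (α := fun _ => ℝ) (x k).ofLp (t k)

theorem augmentedMatrix_mul_transpose_apply {l m n : ℕ} (x : Fin l → EuclideanSpace ℝ (Fin n))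
    (s : Fin l → ℝ) (y : Fin m → EuclideanSpace ℝ (Fin n)) (t : Fin m → ℝ)
    (k : Fin l) (i : Fin m) :
    (augmentedMatrix x s * (augmentedMatrix y t)ᵀ) k i = ⟪x k, y i⟫ + s k * t i := by
  simp [mul_apply, Fin.sum_univ_castSucc, augmentedMatrix, PiLp.inner_apply, mul_comm]

theorem augmentedMatrix_mul_transpose_eq_diagonal {m n : ℕ}
    {u v : Fin m → EuclideanSpace ℝ (Fin n)} {h : Fin m → ℝ}
    (hv : ∀ i k, k ≠ i → ⟪u i, v k⟫ = h i) :
    augmentedMatrix v (fun _ => -1) * (augmentedMatrix u h)ᵀ =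
      diagonal fun i => ⟪u i, v i⟫ - h i := by
  ext k i
  rw [augmentedMatrix_mul_transpose_apply, real_inner_comm]
  obtain rfl | hki := eq_or_ne k i
  · simp [sub_eq_add_neg]
  · simp [hki, hv i k hki]

theorem det_augmentedMatrix_const (x : Fin 3 → ℝ²) (c : ℝ) :
    (augmentedMatrix x fun _ => c).det = c * wedge (x 1 - x 0) (x 2 - x 0) := by
  simp [det_fin_three, augmentedMatrix, Fin.snoc, wedge]
  ring

theorem sides_sq_prod_eq_four_mul_sq_mul_sq_wedge {v : Fin 3 → ℝ²} {R : ℝ}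
    (hv : ∀ i, ‖v i‖ = R) :
    ‖v 1 - v 2‖ ^ 2 * ‖v 0 - v 2‖ ^ 2 * ‖v 0 - v 1‖ ^ 2 =
      4 * R ^ 2 * wedge (v 1 - v 0) (v 2 - v 0) ^ 2 := by
  -- a symmetric `3 × 3` matrix with zero diagonal has determinant `2 g₀₁ g₁₂ g₀₂`
  have hG : augmentedMatrix v (fun _ => 1) *
      (augmentedMatrix (fun j => (-2 : ℝ) • v j) fun _ => 2 * R ^ 2)ᵀ =
      of fun i j => ‖v i - v j‖ ^ 2 := by
    ext i j
    rw [augmentedMatrix_mul_transpose_apply, of_apply, norm_sub_sq_real, hv, hv,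
      real_inner_smul_right]
    ring
  have hdet := congrArg det hG
  rw [det_mul, det_transpose, det_augmentedMatrix_const, det_augmentedMatrix_const,
    det_fin_three] at hdet
  simp only [of_apply, sub_self, norm_zero, wedge, PiLp.sub_apply, PiLp.smul_apply,
    smul_eq_mul] at hdet ⊢
  rw [norm_sub_rev (v 1) (v 0), norm_sub_rev (v 2) (v 0), norm_sub_rev (v 2) (v 1)] at hdet
  linear_combination -hdet / 2

theorem convexHull_zero_single_single :
    convexHull ℝ {0, EuclideanSpace.single 0 1, EuclideanSpace.single 1 1} =
      {p : ℝ² | 0 ≤ p 0 ∧ 0 ≤ p 1 ∧ p 0 + p 1 ≤ 1} := by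
  apply Subset.antisymm
  · refine convexHull_min ?_ ?_
    · rintro z (rfl | rfl | rfl) <;> simp
    · rintro p ⟨hp0, hp1, hp⟩ q ⟨hq0, hq1, hq⟩ α β hα hβ hαβ
      simp only [mem_ofPred_eq, PiLp.add_apply, PiLp.smul_apply, smul_eq_mul]
      refine ⟨by positivity, by positivity, ?_⟩
      nlinarith [mul_le_mul_of_nonneg_left hp hα, mul_le_mul_of_nonneg_left hq hβ]
  · rintro p ⟨hp0, hp1, hp⟩
    have hmem := (convex_convexHull ℝ ({0, EuclideanSpace.single 0 1,
        EuclideanSpace.single 1 1} : Set (ℝ²))).sum_mem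
      (t := Finset.univ) (w := ![1 - p 0 - p 1, p 0, p 1])
      (z := ![0, EuclideanSpace.single 0 1, EuclideanSpace.single 1 1])
      (fun i _ => by fin_cases i <;> simp <;> linarith)
      (by simp [Fin.sum_univ_three, sub_add_eq_add_sub])
      (fun i _ => subset_convexHull ℝ _ (by fin_cases i <;> simp))
    convert hmem
    ext i
    fin_cases i <;> simp [Fin.sum_univ_three]

theorem volume_prod_stdTriangle :
    volume {p : ℝ × ℝ | 0 ≤ p.1 ∧ 0 ≤ p.2 ∧ p.1 + p.2 ≤ 1} = ENNReal.ofReal (1 / 2) := by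
  have hS : {p : ℝ × ℝ | 0 ≤ p.1 ∧ 0 ≤ p.2 ∧ p.1 + p.2 ≤ 1} =
      {p : ℝ × ℝ | p.1 ∈ Icc 0 1 ∧ p.2 ∈ Icc 0 (1 - p.1)} := by
    ext p
    simp only [mem_ofPred_eq, mem_Icc]
    constructor
    · rintro ⟨h1, h2, h3⟩; exact ⟨⟨h1, by linarith⟩, h2, by linarith⟩
    · rintro ⟨⟨h1, -⟩, h2, h3⟩; exact ⟨h1, h2, by linarith⟩
  have hslice (x : ℝ) :
      volume (Prod.mk x ⁻¹' {p : ℝ × ℝ | p.1 ∈ Icc 0 1 ∧ p.2 ∈ Icc 0 (1 - p.1)}) =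
      (Icc 0 1).indicator (fun x => ENNReal.ofReal (1 - x)) x := by
    by_cases hx : x ∈ Icc (0 : ℝ) 1
    · rw [indicator_of_mem hx, ← sub_zero (1 - x), ← Real.volume_Icc]
      congr 1
      ext y
      simp [hx.1, hx.2]
    · rw [mem_Icc] at hx
      simp [hx, preimage]
  rw [hS, Measure.volume_eq_prod, Measure.prod_apply
    (measurableSet_region_between_cc measurable_const (by fun_prop) measurableSet_Icc)]
  simp_rw [hslice]
  rw [lintegral_indicator measurableSet_Icc, ← ofReal_integral_eq_lintegral_ofReal
    (Continuous.integrableOn_Icc (by fun_prop))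
    ((ae_restrict_iff' measurableSet_Icc).2 (ae_of_all _ fun x hx => sub_nonneg.2 hx.2)),
    integral_Icc_eq_integral_Ioc, ← intervalIntegral.integral_of_le zero_le_one,
    intervalIntegral.integral_sub intervalIntegrable_const intervalIntegral.intervalIntegrable_id]
  norm_num

theorem volume_convexHull_zero_single_single :
    volume (convexHull ℝ {0, EuclideanSpace.single 0 1, EuclideanSpace.single 1 1} :
      Set (ℝ²)) = ENNReal.ofReal (1 / 2) := by
  rw [convexHull_zero_single_single, ← volume_prod_stdTriangle]
  exact ((volume_preserving_finTwoArrow ℝ).comp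
    (PiLp.volume_preserving_ofLp (Fin 2))).measure_preimage
      (s := {p : ℝ × ℝ | 0 ≤ p.1 ∧ 0 ≤ p.2 ∧ p.1 + p.2 ≤ 1}) (by measurability)

theorem volume_convexHull_zero_pair (a b : ℝ²) :
    volume (convexHull ℝ {0, a, b}) = ENNReal.ofReal (|wedge a b| / 2) := by
  let e := (EuclideanSpace.basisFun (Fin 2) ℝ).toBasis
  let L := Matrix.toLin e e !![a 0, b 0; a 1, b 1]
  have hdet : LinearMap.det L = wedge a b := by
    rw [LinearMap.det_toLin, det_fin_two_of, wedge]
    ring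
  have he (i : Fin 2) : EuclideanSpace.single i (1 : ℝ) = e i := by simp [e]
  have himage : L '' {0, EuclideanSpace.single 0 1, EuclideanSpace.single 1 1} = {0, a, b} := by
    simp only [image_insert_eq, image_singleton, map_zero, he, L, Matrix.toLin_self]
    congr <;> ext i <;> fin_cases i <;> simp [Fin.sum_univ_two, e]
  rw [← himage, ← LinearMap.image_convexHull, Measure.addHaar_image_linearMap, hdet,
    volume_convexHull_zero_single_single, ← ENNReal.ofReal_mul (abs_nonneg _), mul_one_div]

theorem volume_convexHull_range_fin_three (v : Fin 3 → ℝ²) :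
    volume (convexHull ℝ (range v)) = ENNReal.ofReal (|wedge (v 1 - v 0) (v 2 - v 0)| / 2) := by
  have hrange : range v = v 0 +ᵥ ({0, v 1 - v 0, v 2 - v 0} : Set _) := by
    simp only [vadd_set_insert, vadd_set_singleton, vadd_eq_add, add_zero, add_sub_cancel]
    ext x
    simp [Fin.exists_fin_succ, eq_comm]
  rw [hrange, convexHull_vadd, measure_vadd, volume_convexHull_zero_pair]

theorem sq_two_mul_mul_det_eq_sq_wedge {u v : Fin 3 → ℝ²} {h : Fin 3 → ℝ}
    {R : ℝ} (hcirc : ∀ i, ‖v i‖ = R) (hinj : Function.Injective v) (hunit : ∀ i, ‖u i‖ = 1)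
    (hv : ∀ i k, k ≠ i → ⟪u i, v k⟫ = h i) :
    (2 * R * (augmentedMatrix u h)ᵀ.det) ^ 2 = wedge (v 1 - v 0) (v 2 - v 0) ^ 2 := by
  set C := wedge (v 1 - v 0) (v 2 - v 0)
  set d := (augmentedMatrix u h)ᵀ.det
  set H : Fin 3 → ℝ := fun i => ⟪u i, v i⟫ - h i
  have hdiag : -C * d = H 0 * H 1 * H 2 := by
    have := congrArg det (augmentedMatrix_mul_transpose_eq_diagonal hv)
    rwa [det_mul, det_augmentedMatrix_const, det_diagonal, Fin.prod_univ_three, neg_one_mul] at this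
  have h0 : H 0 ^ 2 * ‖v 1 - v 2‖ ^ 2 = C ^ 2 :=
    sq_inner_sub_mul_norm_sub_sq_eq_sq_wedge (hunit 0) (hv 0 1 (by decide)) (hv 0 2 (by decide))
  have h1 : H 1 ^ 2 * ‖v 0 - v 2‖ ^ 2 = C ^ 2 := by
    rw [sq_inner_sub_mul_norm_sub_sq_eq_sq_wedge (hunit 1) (hv 1 0 (by decide))
      (hv 1 2 (by decide))]
    simp only [C, wedge, PiLp.sub_apply]
    ring
  have h2 : H 2 ^ 2 * ‖v 0 - v 1‖ ^ 2 = C ^ 2 := by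
    rw [sq_inner_sub_mul_norm_sub_sq_eq_sq_wedge (hunit 2) (hv 2 0 (by decide))
      (hv 2 1 (by decide))]
    simp only [C, wedge, PiLp.sub_apply]
    ring
  have hsides :
      ‖v 1 - v 2‖ ^ 2 * ‖v 0 - v 2‖ ^ 2 * ‖v 0 - v 1‖ ^ 2 = 4 * R ^ 2 * C ^ 2 :=
    sides_sq_prod_eq_four_mul_sq_mul_sq_wedge hcirc
  have hC : C ≠ 0 := by
    intro hC0
    rw [hC0] at hsides
    simp [sub_eq_zero, hinj.eq_iff] at hsides
  refine mul_right_cancel₀ (pow_ne_zero 4 hC) ?_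
  calc (2 * R * d) ^ 2 * C ^ 4 = 4 * R ^ 2 * C ^ 2 * (-C * d) ^ 2 := by ring
    _ = ‖v 1 - v 2‖ ^ 2 * ‖v 0 - v 2‖ ^ 2 * ‖v 0 - v 1‖ ^ 2 * (H 0 * H 1 * H 2) ^ 2 := by
      rw [hsides, hdiag]
    _ = (H 0 ^ 2 * ‖v 1 - v 2‖ ^ 2) * (H 1 ^ 2 * ‖v 0 - v 2‖ ^ 2) *
        (H 2 ^ 2 * ‖v 0 - v 1‖ ^ 2) := by ring
    _ = C ^ 2 * C ^ 4 := by rw [h0, h1, h2]; ring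

theorem stmt6_general (u v : Fin 3 → EuclideanSpace ℝ (Fin 2)) (h : Fin 3 → ℝ) (R : ℝ)
    (hR : 0 < R) (hcirc : ∀ i, ‖v i‖ = R)
    (haff : AffineIndependent ℝ v)
    (hunit : ∀ i, ‖u i‖ = 1)
    (hv : ∀ i k, k ≠ i → ⟪u i, v k⟫ = h i)
    (M : Matrix (Fin 3) (Fin 3) ℝ)
    (hM : ∀ c, (∀ r : Fin 2, M r.castSucc c = u c r) ∧ M (Fin.last 2) c = h c) :
    |M.det| =
      (MeasureTheory.volume (convexHull ℝ (Set.range v))).toReal / R := by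
  have hM' : M = (augmentedMatrix u h)ᵀ := by
    ext r c
    induction r using Fin.lastCases with
    | last => simp only [transpose_apply, augmentedMatrix, of_apply, Fin.snoc_last, (hM c).2]
    | cast r =>
      simp only [transpose_apply, augmentedMatrix, of_apply, Fin.snoc_castSucc, (hM c).1 r]
  have hsq := (sq_eq_sq_iff_abs_eq_abs _ _).1
    (hM' ▸ sq_two_mul_mul_det_eq_sq_wedge hcirc haff.injective hunit hv)
  rw [abs_mul, abs_of_pos (by positivity : 0 < 2 * R)] at hsq
  rw [volume_convexHull_range_fin_three, ENNReal.toReal_ofReal (by positivity)]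
  field_simp
  linarith

/-- For a nondegenerate triangle `Δ ⊂ ℝ²` with circumcenter at the
origin (circumradius `R`), unit outward edge normals `u i` and heights `h i` over
the origin, the determinant of the `3×3` matrix with columns `(u i, h i)` equals, in
absolute value, `Area(Δ)/R`. -/
theorem stmt6 (u v : Fin 3 → EuclideanSpace ℝ (Fin 2)) (h : Fin 3 → ℝ) (R : ℝ)
    (hR : 0 < R) (hcirc : ∀ i, ‖v i‖ = R)
    (haff : AffineIndependent ℝ v)
    (hunit : ∀ i, ‖u i‖ = 1)
    (hv : ∀ i k, k ≠ i → ⟪u i, v k⟫ = h i)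
    (hout : ∀ i, ⟪u i, v i⟫ < h i)
    (M : Matrix (Fin 3) (Fin 3) ℝ)
    (hM : ∀ c, (∀ r : Fin 2, M r.castSucc c = u c r) ∧ M (Fin.last 2) c = h c) :
    |M.det| =
      (MeasureTheory.volume (convexHull ℝ (Set.range v))).toReal / R :=
  stmt6_general u v h R hR hcirc haff hunit hv M hM
end

section
/- Let d ≥ 1 and ℓ_0, …, ℓ_{d+1} be positive reals. For variables y_0, …, y_{d+1} with y_0 = y_{d+1} = 0, the identity ∑_{k=1}^d ℓ_k² y_k² = −∑_{0 ≤ i < j ≤ d} (ℓ_{i+1}² + ⋯ + ℓ_j²)(y_{i+1} − y_i)(y_{j+1} − y_j) holds. -/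
/-- For `d ≥ 1`, positive reals `ℓ 0, …, ℓ (d+1)` and reals
`y 0, …, y (d+1)` with `y 0 = y (d+1) = 0`, the telescoping identity
`∑_{k=1}^d ℓ_k² y_k² = −∑_{0 ≤ i < j ≤ d} (ℓ_{i+1}² + ⋯ + ℓ_j²)(y_{i+1} − y_i)(y_{j+1} − y_j)`
holds. -/
theorem stmt7 (d : ℕ) (hd : 1 ≤ d) (ℓ y : ℕ → ℝ)
    (hℓ : ∀ k ≤ d + 1, 0 < ℓ k)
    (hy0 : y 0 = 0) (hyd : y (d + 1) = 0) :
    ∑ k ∈ Finset.Icc 1 d, (ℓ k) ^ 2 * (y k) ^ 2 =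
      -∑ i ∈ Finset.range (d + 1), ∑ j ∈ Finset.range (d + 1),
        (if i < j then
          (∑ k ∈ Finset.Icc (i + 1) j, (ℓ k) ^ 2) * ((y (i + 1) - y i) * (y (j + 1) - y j))
        else 0) := by
  set x : ℕ → ℝ := fun i => y (i + 1) - y i with hx
  have hx1 : ∀ k, ∑ i ∈ Finset.range k, x i = y k := by
    intro k
    simp only [hx]
    rw [Finset.sum_range_sub, hy0, sub_zero]
  have hx2 : ∀ k, k ≤ d + 1 → ∑ j ∈ Finset.Icc k d, x j = - y k := by
    intro k hk
    rw [← Finset.Ico_add_one_right_eq_Icc, Finset.sum_Ico_eq_sub _ hk, hx1, hx1, hyd, zero_sub]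
  -- Step 1: rewrite each (i,j) term as a sum over k ∈ Icc 1 d
  have step1 : ∀ i ∈ Finset.range (d + 1), ∀ j ∈ Finset.range (d + 1),
      (if i < j then
          (∑ k ∈ Finset.Icc (i + 1) j, (ℓ k) ^ 2) * (x i * x j)
        else 0)
      = ∑ k ∈ Finset.Icc 1 d,
          (if i < k ∧ k ≤ j then (ℓ k) ^ 2 * (x i * x j) else 0) := by
    intro i hi j hj
    simp only [Finset.mem_range] at hi hj
    have hfil : Finset.filter (fun k => i < k ∧ k ≤ j) (Finset.Icc 1 d)
        = Finset.Icc (i + 1) j := by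
      ext k
      simp only [Finset.mem_filter, Finset.mem_Icc]
      omega
    rw [← Finset.sum_filter, hfil, ← Finset.sum_mul]
    split
    · rfl
    · rename_i h
      rw [Finset.Icc_eq_empty (by omega), Finset.sum_empty, zero_mul]
  -- Step 2: per-k evaluation of the double sum
  have key : ∀ k ∈ Finset.Icc 1 d,
      ∑ i ∈ Finset.range (d + 1), ∑ j ∈ Finset.range (d + 1),
        (if i < k ∧ k ≤ j then (ℓ k) ^ 2 * (x i * x j) else 0)
      = -((ℓ k) ^ 2 * (y k) ^ 2) := by
    intro k hk
    simp only [Finset.mem_Icc] at hk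
    have h1 : Finset.filter (fun i => i < k) (Finset.range (d + 1)) = Finset.range k := by
      ext i
      simp only [Finset.mem_filter, Finset.mem_range]
      omega
    have h2 : Finset.filter (fun j => k ≤ j) (Finset.range (d + 1)) = Finset.Icc k d := by
      ext j
      simp only [Finset.mem_filter, Finset.mem_range, Finset.mem_Icc]
      omega
    have hinner : ∀ i, ∑ j ∈ Finset.range (d + 1),
        (if i < k ∧ k ≤ j then (ℓ k) ^ 2 * (x i * x j) else 0)
        = (if i < k then (ℓ k) ^ 2 * x i * (∑ j ∈ Finset.Icc k d, x j) else 0) := by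
      intro i
      by_cases h : i < k
      · simp only [h, true_and, if_true]
        rw [← Finset.sum_filter, h2, Finset.mul_sum]
        congr 1
        ext j
        ring
      · simp [h]
    calc ∑ i ∈ Finset.range (d + 1), ∑ j ∈ Finset.range (d + 1),
          (if i < k ∧ k ≤ j then (ℓ k) ^ 2 * (x i * x j) else 0)
        = ∑ i ∈ Finset.range (d + 1),
            (if i < k then (ℓ k) ^ 2 * x i * (∑ j ∈ Finset.Icc k d, x j) else 0) := by
          exact Finset.sum_congr rfl fun i _ => hinner i
      _ = ∑ i ∈ Finset.range k, (ℓ k) ^ 2 * x i * (∑ j ∈ Finset.Icc k d, x j) := by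
          rw [← Finset.sum_filter, h1]
      _ = (ℓ k) ^ 2 * (∑ i ∈ Finset.range k, x i) * (∑ j ∈ Finset.Icc k d, x j) := by
          rw [← Finset.sum_mul, ← Finset.mul_sum]
      _ = -((ℓ k) ^ 2 * (y k) ^ 2) := by
          rw [hx1, hx2 k (by omega)]
          ring
  -- assemble
  have : ∑ i ∈ Finset.range (d + 1), ∑ j ∈ Finset.range (d + 1),
        (if i < j then
          (∑ k ∈ Finset.Icc (i + 1) j, (ℓ k) ^ 2) * (x i * x j)
        else 0)
      = ∑ k ∈ Finset.Icc 1 d, -((ℓ k) ^ 2 * (y k) ^ 2) := by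
    rw [Finset.sum_congr rfl (fun i hi => Finset.sum_congr rfl (fun j hj => step1 i hi j hj))]
    rw [Finset.sum_congr rfl (fun i _ => Finset.sum_comm), Finset.sum_comm]
    exact Finset.sum_congr rfl key
  simp only [hx] at this
  rw [this, ← Finset.sum_neg_distrib]
  simp
end

section
/- Let U be a d×(d+1) real matrix with columns u_0,…,u_d, let v_i, v_j ∈ ℝ^d, h_k ∈ ℝ with ⟨u_k, v_i⟩ = h_k and ⟨u_k, v_j⟩ = h_k for all k ∉ {i,j}, plus ⟨u_i,v_i⟩ < h_i, ⟨u_j,v_j⟩ < h_j. Let A be the (d+1)×(d+1) matrix with rows (u_kᵀ, −h_k) and let D_{ij} be the (d+1)×(d+1) matrix with columns (u_k, 0) for k ∉ {i,j} and columns (v_i, 1), (v_j, 1) in positions i and j. Then A·D_{ij} equals the Gram matrix UᵀU with columns i and j replaced by a_i e_i and a_j e_j respectively, where a_k = ⟨u_k,v_k⟩ − h_k; consequently det(A·D_{ij}) = a_i a_j · det(U_{(ij)}ᵀ U_{(ij)}) > 0, where U_{(ij)} is U with columns i,j deleted and U_{(ij)} has linearly independent columns. -/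
/-!
Outside columns `i`, `j` the last row of `D` vanishes, so `A * D` agrees with the Gram matrix of
the `u k`; in columns `i`, `j` the heights cancel every entry except the diagonal ones `aᵢ`, `aⱼ`.
Expanding the determinant along these two columns leaves `aᵢ aⱼ` times the Gram determinant of the
remaining `u k`, which is positive by linear independence, while `aᵢ, aⱼ < 0`.
-/

namespace Matrix

variable {n p R : Type*} [CommRing R]

theorem det_eq_prod_diag_mul_det_compl [Fintype n] [DecidableEq n] (M : Matrix n n R)
    (s : Finset n) (hs : ∀ c ∈ s, ∀ k, k ≠ c → M k c = 0) :
    M.det = (∏ c ∈ s, M c c) * (M.toSquareBlockProp (· ∉ s)).det := by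
  rw [M.twoBlockTriangular_det (· ∈ s)
    fun k hk c hc => hs c hc k (ne_of_mem_of_not_mem hc hk).symm]
  have hdiag : M.toSquareBlockProp (· ∈ s) = diagonal fun c : s => M c c := by
    ext a b
    obtain rfl | hab := eq_or_ne a b
    · simp [toSquareBlockProp]
    · simpa [toSquareBlockProp, hab] using hs b b.2 a (Subtype.coe_ne_coe.mpr hab)
  rw [hdiag]
  convert congrArg (· * _) det_diagonal
  exact Finset.prod_subtype s (fun _ => Iff.rfl) _

theorem mul_apply_eq_dotProduct_castSucc_add_last {d : ℕ}
    (A : Matrix n (Fin (d + 1)) R) (B : Matrix (Fin (d + 1)) p R) (k : n) (c : p) :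
    (A * B) k c = (fun r : Fin d => A k r.castSucc) ⬝ᵥ (fun r : Fin d => B r.castSucc c) +
      A k (Fin.last d) * B (Fin.last d) c := by
  rw [mul_apply, Fin.sum_univ_castSucc]
  rfl

theorem det_gram_dotProduct_pos {ι n : Type*} [Fintype ι] [DecidableEq ι] [Fintype n]
    {w : ι → n → ℝ} (hw : LinearIndependent ℝ w) :
    0 < (of fun a b => w a ⬝ᵥ w b).det := by
  have hgram : (of fun a b => w a ⬝ᵥ w b) = gram ℝ (fun a => WithLp.toLp 2 (w a)) := by
    ext a b
    simp [EuclideanSpace.inner_eq_star_dotProduct, dotProduct_comm]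
  rw [hgram]
  exact (posDef_gram_of_linearIndependent
    (hw.map' (WithLp.linearEquiv 2 ℝ (n → ℝ)).symm.toLinearMap (LinearEquiv.ker _))).det_pos

end Matrix

open Matrix

theorem mul_apply_eq_gram_update {d : ℕ} {u : Fin (d + 1) → (Fin d → ℝ)} {vi vj : Fin d → ℝ}
    {h : Fin (d + 1) → ℝ} {i j : Fin (d + 1)}
    (hvi : ∀ k, k ≠ i → u k ⬝ᵥ vi = h k) (hvj : ∀ k, k ≠ j → u k ⬝ᵥ vj = h k)
    {A D : Matrix (Fin (d + 1)) (Fin (d + 1)) ℝ}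
    (hA : ∀ k, (∀ c : Fin d, A k c.castSucc = u k c) ∧ A k (Fin.last d) = -h k)
    (hDi : (∀ r : Fin d, D r.castSucc i = vi r) ∧ D (Fin.last d) i = 1)
    (hDj : (∀ r : Fin d, D r.castSucc j = vj r) ∧ D (Fin.last d) j = 1)
    (hDk : ∀ c, c ≠ i → c ≠ j →
      (∀ r : Fin d, D r.castSucc c = u c r) ∧ D (Fin.last d) c = 0) (k c : Fin (d + 1)) :
    (A * D) k c =
      if c = i then (if k = i then u i ⬝ᵥ vi - h i else 0)
      else if c = j then (if k = j then u j ⬝ᵥ vj - h j else 0)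
      else u k ⬝ᵥ u c := by
  rw [mul_apply_eq_dotProduct_castSucc_add_last, funext (hA k).1, (hA k).2]
  by_cases hci : c = i
  · subst hci
    rw [funext hDi.1, hDi.2, if_pos rfl]
    split_ifs with hki
    · subst hki; ring
    · rw [hvi k hki]; ring
  by_cases hcj : c = j
  · subst hcj
    rw [funext hDj.1, hDj.2, if_neg hci, if_pos rfl]
    split_ifs with hkj
    · subst hkj; ring
    · rw [hvj k hkj]; ring
  rw [funext (hDk c hci hcj).1, (hDk c hci hcj).2, if_neg hci, if_neg hcj]
  ring

/-- With `A` the `(d+1)×(d+1)` matrix with rows `(u k ᵀ, −h k)` and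
`D` the matrix with columns `(u k, 0)` for `k ∉ {i,j}` and `(vᵢ, 1)`, `(vⱼ, 1)` in
positions `i`, `j`, the product `A·D` is the Gram matrix `UᵀU` with columns `i`, `j`
replaced by `aᵢ eᵢ` and `aⱼ eⱼ` (where `a k = ⟨u k, v k⟩ − h k`); consequently
`det(A·D) = aᵢ aⱼ · det(U₍ᵢⱼ₎ᵀ U₍ᵢⱼ₎) > 0` when the columns `u k`, `k ∉ {i,j}`, are
linearly independent. -/
theorem stmt10 (d : ℕ) (u : Fin (d + 1) → (Fin d → ℝ)) (vi vj : Fin d → ℝ)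
    (h : Fin (d + 1) → ℝ) (i j : Fin (d + 1)) (hij : i ≠ j)
    (hvi : ∀ k, k ≠ i → u k ⬝ᵥ vi = h k)
    (hvj : ∀ k, k ≠ j → u k ⬝ᵥ vj = h k)
    (hai : u i ⬝ᵥ vi < h i) (haj : u j ⬝ᵥ vj < h j)
    (hind : LinearIndependent ℝ (fun k : {k : Fin (d + 1) // k ≠ i ∧ k ≠ j} => u k))
    (A D : Matrix (Fin (d + 1)) (Fin (d + 1)) ℝ)
    (hA : ∀ k, (∀ c : Fin d, A k c.castSucc = u k c) ∧ A k (Fin.last d) = -h k)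
    (hDi : (∀ r : Fin d, D r.castSucc i = vi r) ∧ D (Fin.last d) i = 1)
    (hDj : (∀ r : Fin d, D r.castSucc j = vj r) ∧ D (Fin.last d) j = 1)
    (hDk : ∀ c, c ≠ i → c ≠ j →
      (∀ r : Fin d, D r.castSucc c = u c r) ∧ D (Fin.last d) c = 0) :
    (∀ k c, (A * D) k c =
        if c = i then (if k = i then u i ⬝ᵥ vi - h i else 0)
        else if c = j then (if k = j then u j ⬝ᵥ vj - h j else 0)
        else u k ⬝ᵥ u c) ∧
    (A * D).det =
      (u i ⬝ᵥ vi - h i) * (u j ⬝ᵥ vj - h j) *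
        (Matrix.of (fun a b : {k : Fin (d + 1) // k ≠ i ∧ k ≠ j} => u a ⬝ᵥ u b)).det ∧
    0 < (A * D).det := by
  have entry := mul_apply_eq_gram_update hvi hvj hA hDi hDj hDk
  have hdet : (A * D).det = (u i ⬝ᵥ vi - h i) * (u j ⬝ᵥ vj - h j) *
      (of fun a b : {k // k ≠ i ∧ k ≠ j} => u a ⬝ᵥ u b).det := by
    have cols : ∀ c ∈ ({i, j} : Finset _), ∀ k, k ≠ c → (A * D) k c = 0 := by
      intro c hc k hk
      obtain rfl | rfl : c = i ∨ c = j := by simpa using hc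
      all_goals simp [entry, hk, hij.symm]
    rw [det_eq_prod_diag_mul_det_compl (A * D) {i, j} cols, Finset.prod_pair hij,
      equiv_block_det _ (q := fun k => k ≠ i ∧ k ≠ j) (by simp)]
    congr 2
    · simp [entry]
    · simp [entry, hij.symm]
    · ext a b
      simp [toSquareBlockProp, entry, b.2.1, b.2.2]
  refine ⟨entry, hdet, ?_⟩
  rw [hdet]
  exact mul_pos (mul_pos_of_neg_of_neg (by linarith) (by linarith)) (det_gram_dotProduct_pos hind)
end
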